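/- arXiv:1106.1042 — 4 statements merged into one kernel-verified Lean document; each statement's English description precedes it below -/
import Mathlib

section
/- For all real z with |z| < 1, ∑_{n=1}^∞ (H_n / n) z^n = Li₂(z) + (1/2) log²(1-z). -/
/-!
Since `H (n + 1) / (n + 1) = 1 / (n + 1) ^ 2 + H n / (n + 1)`, the series splits into `Li₂(z)` and
`∑ H n / (n + 1) * z ^ (n + 1)`. The latter is half the Cauchy square of
`-log (1 - z) = ∑ z ^ (n + 1) / (n + 1)`: by partial fractions,
`∑_{i + j = n} 1 / ((i + 1) (j + 1)) = 2 H (n + 1) / (n + 2)`.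
-/

/-- The `n`-th harmonic number `H_n = ∑_{k=1}^n 1/k`. -/
noncomputable def H (n : ℕ) : ℝ := ∑ k ∈ Finset.range n, (1 : ℝ) / (k + 1)

/-- The dilogarithm `Li₂(z) = ∑_{n=1}^∞ z^n / n²`. -/
noncomputable def Li2 (z : ℝ) : ℝ := ∑' n : ℕ, z ^ (n + 1) / ((n : ℝ) + 1) ^ 2

open Finset

lemma H_zero : H 0 = 0 := sum_range_zero _

lemma H_succ (n : ℕ) : H (n + 1) = H n + 1 / (n + 1) := by
  simp [H, sum_range_succ]

lemma sum_antidiagonal_one_div_succ_mul_succ (n : ℕ) :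
    ∑ p ∈ antidiagonal n, (1 : ℝ) / ((p.1 + 1) * (p.2 + 1)) = 2 * H (n + 1) / (n + 2) := by
  have partial_fractions : ∀ p ∈ antidiagonal n,
      (1 : ℝ) / ((p.1 + 1) * (p.2 + 1)) = (1 / (p.1 + 1) + 1 / (p.2 + 1)) / (n + 2) := by
    rintro ⟨i, j⟩ hij
    rw [HasAntidiagonal.mem_antidiagonal] at hij
    have : (n : ℝ) + 2 = (i + 1) + (j + 1) := by rw [← hij]; push_cast; ring
    rw [this]
    field_simp
    ring
  have sum_fst : ∑ p ∈ antidiagonal n, (1 : ℝ) / (p.1 + 1) = H (n + 1) :=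
    Nat.sum_antidiagonal_eq_sum_range_succ_mk _ n
  have sum_snd : ∑ p ∈ antidiagonal n, (1 : ℝ) / (p.2 + 1) = H (n + 1) :=
    (Nat.sum_antidiagonal_swap (f := fun p => (1 : ℝ) / (p.1 + 1))).trans sum_fst
  rw [sum_congr rfl partial_fractions, ← sum_div, sum_add_distrib, sum_fst, sum_snd, two_mul]

lemma summable_norm_pow_succ_div_succ {z : ℝ} (hz : |z| < 1) :
    Summable fun n : ℕ => ‖z ^ (n + 1) / (n + 1)‖ := by
  have := (Real.hasSum_pow_div_log_of_abs_lt_one (x := |z|) (by rwa [abs_abs])).summable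
  convert this using 2 with n
  rw [norm_div, norm_pow, Real.norm_eq_abs, Real.norm_of_nonneg n.cast_add_one_pos.le]

lemma summable_pow_succ_div_succ_sq {z : ℝ} (hz : |z| < 1) :
    Summable fun n : ℕ => z ^ (n + 1) / ((n : ℝ) + 1) ^ 2 := by
  refine .of_norm_bounded (summable_norm_pow_succ_div_succ hz) fun n => ?_
  rw [norm_div, norm_div, norm_pow ((n : ℝ) + 1), Real.norm_of_nonneg n.cast_add_one_pos.le]
  gcongr
  exact le_self_pow₀ (le_add_of_nonneg_left n.cast_nonneg) two_ne_zero

lemma sum_antidiagonal_pow_succ_div_succ_mul (z : ℝ) (n : ℕ) :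
    ∑ p ∈ antidiagonal n, z ^ (p.1 + 1) / (p.1 + 1) * (z ^ (p.2 + 1) / (p.2 + 1))
      = 2 * (H (n + 1) / (n + 2) * z ^ (n + 2)) := by
  have factor : ∀ p ∈ antidiagonal n, z ^ (p.1 + 1) / (p.1 + 1) * (z ^ (p.2 + 1) / (p.2 + 1))
      = z ^ (n + 2) * (1 / ((p.1 + 1) * (p.2 + 1))) := by
    rintro ⟨i, j⟩ hij
    rw [HasAntidiagonal.mem_antidiagonal] at hij
    subst hij
    field_simp
    ring
  rw [sum_congr rfl factor, ← mul_sum, sum_antidiagonal_one_div_succ_mul_succ]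
  ring

lemma hasSum_H_div_succ_mul_pow {z : ℝ} (hz : |z| < 1) :
    HasSum (fun n : ℕ => H n / (n + 1) * z ^ (n + 1)) (Real.log (1 - z) ^ 2 / 2) := by
  have hnorm := summable_norm_pow_succ_div_succ hz
  have cauchy_product := tsum_mul_tsum_eq_tsum_sum_antidiagonal_of_summable_norm hnorm hnorm
  rw [(Real.hasSum_pow_div_log_of_abs_lt_one hz).tsum_eq, neg_mul_neg, ← sq] at cauchy_product
  have log_sq : HasSum (fun n : ℕ => 2 * (H (n + 1) / (n + 2) * z ^ (n + 2)))
      (Real.log (1 - z) ^ 2) := by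
    simp_rw [← sum_antidiagonal_pow_succ_div_succ_mul, cauchy_product]
    exact (summable_norm_sum_mul_antidiagonal_of_summable_norm hnorm hnorm).of_norm.hasSum
  rw [← hasSum_nat_add_iff' 1, sum_range_one, H_zero, zero_div, zero_mul, sub_zero]
  refine (log_sq.div_const 2).congr_fun fun n => ?_
  push_cast
  ring

/-- For real `|z| < 1`, `∑_{n=1}^∞ (H_n/n) z^n = Li₂(z) + (1/2) log²(1-z)`. -/
theorem harmonic_over_n_generating_function (z : ℝ) (hz : |z| < 1) :
    ∑' n : ℕ, H (n + 1) / ((n : ℝ) + 1) * z ^ (n + 1)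
      = Li2 z + (1 / 2) * Real.log (1 - z) ^ 2 := by
  have split : ∀ n : ℕ, H (n + 1) / ((n : ℝ) + 1) * z ^ (n + 1)
      = z ^ (n + 1) / ((n : ℝ) + 1) ^ 2 + H n / (n + 1) * z ^ (n + 1) := by
    intro n
    rw [H_succ]
    field_simp
    ring
  rw [tsum_congr split, ((summable_pow_succ_div_succ_sq hz).hasSum.add
    (hasSum_H_div_succ_mul_pow hz)).tsum_eq, Li2]
  ring
end

section
/- Raabe's formula: for every real t ≥ 0, ∫₀¹ log Γ(x+t) dx = log √(2π) + t log t - t (with the convention t log t = 0 at t = 0). -/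
/-!
Since `log Γ (x + 1) = log x + log Γ x` for `x ≥ 0`,
`∫ₜ^{t+1} log Γ - ∫₀¹ log Γ = ∫₀ᵗ (log Γ (x + 1) - log Γ x) dx = ∫₀ᵗ log x dx = t log t - t`.
For the value `I = ∫₀¹ log Γ`, integrate the logarithm of Legendre's duplication formula
`Γ(x) Γ(x + 1/2) = 2^(1 - 2x) √π Γ(2x)` over `[0, 1/2]`: the left side gives `I`, the right side
gives `I / 2 + log √(2π) / 2`.
-/

open Real intervalIntegral Set
open MeasureTheory (volume)

namespace Real

theorem log_Gamma_add_one {x : ℝ} (hx : 0 ≤ x) :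
    log (Gamma (x + 1)) = log x + log (Gamma x) := by
  rcases hx.eq_or_lt with rfl | hx
  · simp
  · rw [Gamma_add_one hx.ne', log_mul hx.ne' (Gamma_pos_of_pos hx).ne']

theorem continuousOn_log_Gamma : ContinuousOn (fun x => log (Gamma x)) (Ioi 0) := fun x hx =>
  ((differentiableAt_Gamma fun m => by linarith [mem_Ioi.mp hx, (m.cast_nonneg : (0 : ℝ) ≤ m)]
    ).continuousAt.log (Gamma_pos_of_pos hx).ne').continuousWithinAt

-- Near `0`, `log Γ x = log Γ (x + 1) - log x` is a continuous function minus an integrable one.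
theorem intervalIntegrable_log_Gamma {a b : ℝ} (ha : 0 ≤ a) (hb : 0 ≤ b) :
    IntervalIntegrable (fun x => log (Gamma x)) volume a b := by
  have hnonneg : ∀ x ∈ uIcc a b, 0 ≤ x := fun x hx => (le_min ha hb).trans hx.1
  have hshift : ContinuousOn (fun x => log (Gamma (x + 1))) (uIcc a b) :=
    continuousOn_log_Gamma.comp (by fun_prop) fun x hx => by
      simp only [mem_Ioi]; linarith [hnonneg x hx]
  refine (hshift.intervalIntegrable.sub intervalIntegrable_log').congr fun x hx => ?_
  simp only [log_Gamma_add_one (hnonneg x (Ioc_subset_Icc_self hx))]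
  ring

theorem integral_log_Gamma_add {t : ℝ} (ht : 0 ≤ t) :
    ∫ x in (0 : ℝ)..1, log (Gamma (x + t))
      = (∫ x in (0 : ℝ)..1, log (Gamma x)) + (t * log t - t) := by
  have hint_shift : IntervalIntegrable (fun x => log (Gamma (x + 1))) volume 0 t := by
    simpa using
      (intervalIntegrable_log_Gamma zero_le_one (by linarith : 0 ≤ t + 1)).comp_add_right 1
  have hdiff : ∫ x in (0 : ℝ)..t, (log (Gamma (x + 1)) - log (Gamma x)) = t * log t - t :=
    calc ∫ x in (0 : ℝ)..t, (log (Gamma (x + 1)) - log (Gamma x))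
        = ∫ x in (0 : ℝ)..t, log x := integral_congr fun x hx => by
          simp only [log_Gamma_add_one ((le_min le_rfl ht).trans hx.1), add_sub_cancel_right]
      _ = t * log t - t := by simp [integral_log]
  calc ∫ x in (0 : ℝ)..1, log (Gamma (x + t))
      = ∫ x in t..t + 1, log (Gamma x) := by
        rw [integral_comp_add_right (fun x => log (Gamma x)), zero_add, add_comm 1 t]
    _ = (∫ x in (0 : ℝ)..1, log (Gamma x))
          + ((∫ x in (1 : ℝ)..t + 1, log (Gamma x)) - ∫ x in (0 : ℝ)..t, log (Gamma x)) := by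
        rw [integral_interval_sub_interval_comm'
          (intervalIntegrable_log_Gamma zero_le_one (by linarith))
          (intervalIntegrable_log_Gamma le_rfl ht)
          (intervalIntegrable_log_Gamma zero_le_one le_rfl)]
        ring
    _ = (∫ x in (0 : ℝ)..1, log (Gamma x)) + (t * log t - t) := by
        rw [← hdiff, integral_sub hint_shift (intervalIntegrable_log_Gamma le_rfl ht),
          integral_comp_add_right (fun x => log (Gamma x)), zero_add]

theorem log_Gamma_add_log_Gamma_add_half {x : ℝ} (hx : 0 < x) :
    log (Gamma x) + log (Gamma (x + 1 / 2))
      = log (Gamma (2 * x)) + ((1 - 2 * x) * log 2 + log √π) := by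
  rw [← log_mul (Gamma_pos_of_pos hx).ne' (Gamma_pos_of_pos (by linarith)).ne',
    Gamma_mul_Gamma_add_half, log_mul (by positivity) (by positivity),
    log_mul (Gamma_pos_of_pos (by linarith)).ne' (by positivity), log_rpow two_pos]
  ring

theorem integral_log_Gamma_zero_one :
    ∫ x in (0 : ℝ)..1, log (Gamma x) = log √(2 * π) := by
  set I := ∫ x in (0 : ℝ)..1, log (Gamma x)
  have hint_left : IntervalIntegrable (fun x => log (Gamma x)) volume 0 (1 / 2) :=
    intervalIntegrable_log_Gamma le_rfl (by norm_num)
  have hint_right : IntervalIntegrable (fun x => log (Gamma x)) volume (1 / 2) 1 :=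
    intervalIntegrable_log_Gamma (by norm_num) zero_le_one
  have hint_shift : IntervalIntegrable (fun x => log (Gamma (x + 1 / 2))) volume 0 (1 / 2) := by
    have := hint_right.comp_add_right (1 / 2)
    norm_num at this ⊢
    exact this
  have hint_double : IntervalIntegrable (fun x => log (Gamma (2 * x))) volume 0 (1 / 2) := by
    simpa using (intervalIntegrable_log_Gamma le_rfl zero_le_one).comp_mul_left (c := 2)
  have hint_affine :
      IntervalIntegrable (fun x : ℝ => (1 - 2 * x) * log 2 + log √π) volume 0 (1 / 2) :=
    (by fun_prop : Continuous _).intervalIntegrable _ _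
  have h_double : ∫ x in (0 : ℝ)..1 / 2, log (Gamma (2 * x)) = I / 2 := by
    rw [integral_comp_mul_left (fun x => log (Gamma x)) two_ne_zero]
    norm_num [I]
    ring
  have h_affine : ∫ x in (0 : ℝ)..1 / 2, ((1 - 2 * x) * log 2 + log √π)
      = log 2 / 4 + log √π / 2 := by
    rw [integral_add
      ((intervalIntegrable_const.sub (intervalIntegrable_id.const_mul 2)).mul_const _)
      intervalIntegrable_const, integral_mul_const,
      integral_sub intervalIntegrable_const (intervalIntegrable_id.const_mul 2), integral_const_mul,
      integral_id, integral_const, integral_const]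
    norm_num
    ring
  have h_dup : I = I / 2 + (log 2 / 4 + log √π / 2) :=
    calc I = ∫ x in (0 : ℝ)..1 / 2, (log (Gamma x) + log (Gamma (x + 1 / 2))) := by
          rw [integral_add hint_left hint_shift, integral_comp_add_right (fun x => log (Gamma x)),
            zero_add, add_halves, integral_add_adjacent_intervals hint_left hint_right]
      _ = ∫ x in (0 : ℝ)..1 / 2, (log (Gamma (2 * x)) + ((1 - 2 * x) * log 2 + log √π)) :=
          integral_congr_ae (Filter.Eventually.of_forall fun x hx =>
            log_Gamma_add_log_Gamma_add_half (by simpa using hx.1))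
      _ = I / 2 + (log 2 / 4 + log √π / 2) := by
          rw [integral_add hint_double hint_affine, h_double, h_affine]
  rw [log_sqrt pi_pos.le] at h_dup
  rw [log_sqrt (by positivity), log_mul two_ne_zero pi_ne_zero]
  linarith

end Real

/-- Raabe's formula: for `t ≥ 0`, `∫₀¹ log Γ(x+t) dx = log √(2π) + t log t - t`
(with the convention `t * log t = 0` at `t = 0`, which holds since `Real.log 0 = 0`). -/
theorem raabe_formula (t : ℝ) (ht : 0 ≤ t) :
    ∫ x in (0 : ℝ)..1, Real.log (Real.Gamma (x + t))
      = Real.log (Real.sqrt (2 * π)) + (t * Real.log t - t) := by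
  rw [Real.integral_log_Gamma_add ht, Real.integral_log_Gamma_zero_one]
end

section
/- For real q > 1, s > 0, t > 0 and integer n ≥ 0, ∫₀¹ (q^{n+x+t} - 1)^{-s} dx = (1/(s log q)) [ (q^{n+t}-1)^{1-s} q^{-(n+t)} ₂F₁(1,1;s+1;q^{-n-t}) - (q^{n+t+1}-1)^{1-s} q^{-(n+t+1)} ₂F₁(1,1;s+1;q^{-n-t-1}) ]. -/
/-- The Pochhammer symbol `(a)_k = a(a+1)⋯(a+k-1)` for real `a`. -/
noncomputable def poch (a : ℝ) (k : ℕ) : ℝ := ∏ j ∈ Finset.range k, (a + j)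

/-- The hypergeometric series `₂F₁(1,1;c;z) = ∑_{k=0}^∞ (k!/(c)_k) z^k`. -/
noncomputable def F211 (c z : ℝ) : ℝ := ∑' k : ℕ, (Nat.factorial k : ℝ) / poch c k * z ^ k

/-!
With `F = ₂F₁(1,1;s+1;·)`, the function `f(w) = (1-w)^{1-s} wˢ F(w)` satisfies
`f'(w) = s w^{s-1} (1-w)^{-s}` on `(0,1)`: this is the hypergeometric equation
`(1-w)(sF + wF') = s + (1-s)wF`, which reduces to the coefficient recursion
`(s+1+k)·c_{k+1} = (k+1)·c_k`. Substituting `w = q^{-y}` gives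
`d/dy f(q^{-y}) = -s log q · (q^y - 1)^{-s}`, and the integral follows from the fundamental
theorem of calculus, since `f(q^{-y}) = (q^y-1)^{1-s} q^{-y} F(q^{-y})`.
-/

open Real Nat

lemma poch_succ (c : ℝ) (k : ℕ) : poch c (k + 1) = poch c k * (c + k) :=
  Finset.prod_range_succ _ _

lemma poch_pos {c : ℝ} (hc : 0 < c) (k : ℕ) : 0 < poch c k :=
  Finset.prod_pos fun j _ => by positivity

lemma factorial_le_poch {c : ℝ} (hc : 1 ≤ c) (k : ℕ) : (k ! : ℝ) ≤ poch c k := by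
  rw [← Finset.prod_range_add_one_eq_factorial]
  push_cast
  exact Finset.prod_le_prod (fun j _ => by positivity) fun j _ => by linarith

noncomputable def F211Coeff (c : ℝ) (k : ℕ) : ℝ := (k ! : ℝ) / poch c k

section Coefficients

variable {c : ℝ}

lemma F211_eq_tsum (c z : ℝ) : F211 c z = ∑' k, F211Coeff c k * z ^ k := rfl

lemma F211Coeff_zero (c : ℝ) : F211Coeff c 0 = 1 := by
  simp [F211Coeff, poch]

lemma F211Coeff_succ (hc : 0 < c) (k : ℕ) :
    (c + k) * F211Coeff c (k + 1) = (k + 1) * F211Coeff c k := by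
  have := (poch_pos hc k).ne'
  have : c + k ≠ 0 := by positivity
  rw [F211Coeff, F211Coeff, poch_succ, factorial_succ]
  push_cast
  field_simp

lemma abs_F211Coeff_le_one (hc : 1 ≤ c) (k : ℕ) : |F211Coeff c k| ≤ 1 := by
  have hpos := poch_pos (by linarith) k
  rw [F211Coeff, abs_of_nonneg (by positivity)]
  exact div_le_one_of_le₀ (factorial_le_poch hc k) hpos.le

end Coefficients

section PowerSeries

variable {a : ℕ → ℝ} {C z : ℝ}

lemma summable_mul_pow_of_abs_le (ha : ∀ k, |a k| ≤ C * (k + 1)) (hz : |z| < 1) :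
    Summable fun k => a k * z ^ k := by
  have hz' : ‖|z|‖ < 1 := by rwa [norm_eq_abs, abs_abs]
  have hmaj : Summable fun k : ℕ => C * ((k : ℝ) ^ 1 * |z| ^ k + |z| ^ k) :=
    ((summable_pow_mul_geometric_of_norm_lt_one 1 hz').add
      (summable_geometric_of_norm_lt_one hz')).mul_left C
  refine .of_norm_bounded hmaj fun k => ?_
  rw [norm_mul, norm_pow, norm_eq_abs, norm_eq_abs]
  calc |a k| * |z| ^ k ≤ C * (k + 1) * |z| ^ k := by gcongr; exact ha k
    _ = _ := by ring

lemma hasDerivAt_tsum_mul_pow (ha : ∀ k, |a k| ≤ C) (hz : |z| < 1) :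
    HasDerivAt (fun w => ∑' k, a k * w ^ k) (∑' k : ℕ, k * a k * z ^ (k - 1)) z := by
  obtain ⟨r, hzr, hr1⟩ := exists_between hz
  have hr : |r| < 1 := by rwa [abs_of_nonneg ((abs_nonneg z).trans hzr.le)]
  have hC : 0 ≤ C := (abs_nonneg _).trans (ha 0)
  have hu : Summable fun k : ℕ => C * k * r ^ (k - 1) := by
    refine (summable_nat_add_iff 1).mp ?_
    simpa using summable_mul_pow_of_abs_le (a := fun k => C * (k + 1)) (C := C)
      (fun k => by rw [abs_of_nonneg (by positivity)]) hr
  have hmem : z ∈ Metric.ball 0 r := by simpa using hzr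
  refine hasDerivAt_tsum_of_isPreconnected (g := fun k w => a k * w ^ k)
    (g' := fun k w => k * a k * w ^ (k - 1)) hu Metric.isOpen_ball
    (convex_ball 0 r).isPreconnected (fun k w _ => ?_) (fun k w hw => ?_) hmem
    (summable_mul_pow_of_abs_le (C := C) (fun k => ?_) hz) hmem
  · exact ((hasDerivAt_pow k w).const_mul (a k)).congr_deriv (by ring)
  · rw [mem_ball_zero_iff, norm_eq_abs] at hw
    rw [norm_eq_abs, abs_mul, abs_mul, abs_pow, Nat.abs_cast, mul_comm (k : ℝ)]
    gcongr
    exact ha k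
  · nlinarith [ha k, (k.cast_nonneg : (0 : ℝ) ≤ k)]

end PowerSeries

section F211

variable {c s z : ℝ}

lemma hasDerivAt_F211 (hc : 1 ≤ c) (hz : |z| < 1) :
    HasDerivAt (F211 c) (∑' k : ℕ, k * F211Coeff c k * z ^ (k - 1)) z :=
  hasDerivAt_tsum_mul_pow (abs_F211Coeff_le_one hc) hz

/-- A first integral of the hypergeometric equation of `₂F₁(1,1;s+1;·)`; coefficientwise it is
the recursion `F211Coeff_succ`. -/
lemma F211_ode (hs : 0 ≤ s) (hz : |z| < 1) :
    (1 - z) * (s * F211 (s + 1) z + z * ∑' k : ℕ, k * F211Coeff (s + 1) k * z ^ (k - 1))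
      = s + (1 - s) * z * F211 (s + 1) z := by
  have hcoeff := abs_F211Coeff_le_one (c := s + 1) (by linarith)
  set T : ℕ → ℝ := fun k => (s + k) * F211Coeff (s + 1) k * z ^ k
  have hF : Summable fun k => F211Coeff (s + 1) k * z ^ k :=
    summable_mul_pow_of_abs_le (C := 1)
      (fun k => by linarith [hcoeff k, k.cast_nonneg' (α := ℝ)]) hz
  have hkF : Summable fun k : ℕ => k * F211Coeff (s + 1) k * z ^ k :=
    summable_mul_pow_of_abs_le (C := 1) (fun k => by
      rw [abs_mul, Nat.abs_cast]
      nlinarith [hcoeff k, k.cast_nonneg' (α := ℝ), abs_nonneg (F211Coeff (s + 1) k)]) hz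
  have hT : Summable T :=
    ((hF.mul_left s).add hkF).congr fun k => by simp only [T]; ring
  have hsum : s * F211 (s + 1) z + z * ∑' k : ℕ, k * F211Coeff (s + 1) k * z ^ (k - 1)
      = ∑' k, T k := by
    have hshift : z * ∑' k : ℕ, k * F211Coeff (s + 1) k * z ^ (k - 1)
        = ∑' k : ℕ, k * F211Coeff (s + 1) k * z ^ k := by
      rw [← tsum_mul_left]
      exact tsum_congr fun k => by cases k <;> simp [pow_succ]; ring
    rw [hshift, F211_eq_tsum, ← tsum_mul_left, ← (hF.mul_left s).tsum_add hkF]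
    exact tsum_congr fun k => by simp only [T]; ring
  have hstep : ∀ k, T (k + 1) - z * T k = (1 - s) * z * (F211Coeff (s + 1) k * z ^ k) := by
    intro k
    have := F211Coeff_succ (c := s + 1) (by linarith) k
    simp only [T]
    push_cast
    linear_combination z ^ (k + 1) * this
  calc (1 - z) * (s * F211 (s + 1) z + z * ∑' k : ℕ, k * F211Coeff (s + 1) k * z ^ (k - 1))
      = T 0 + (∑' k, T (k + 1) - ∑' k, z * T k) := by
        rw [hsum, tsum_mul_left]; linear_combination hT.tsum_eq_zero_add
    _ = s + (1 - s) * z * F211 (s + 1) z := by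
        rw [← ((summable_nat_add_iff 1).mpr hT).tsum_sub (hT.mul_left z), tsum_congr hstep,
          tsum_mul_left]
        simp [T, F211Coeff_zero, F211_eq_tsum]

end F211

/-- `s · B(w; s, 1 - s)`, by the formula `B(w; a, b) = wᵃ(1-w)ᵇ/a · ₂F₁(a+b, 1; a+1; w)`. -/
noncomputable def scaledIncBeta (s w : ℝ) : ℝ := (1 - w) ^ (1 - s) * w ^ s * F211 (s + 1) w

section ScaledIncBeta

variable {q s w y : ℝ}

lemma hasDerivAt_scaledIncBeta (hs : 0 ≤ s) (h0 : 0 < w) (h1 : w < 1) :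
    HasDerivAt (scaledIncBeta s) (s * w ^ (s - 1) * (1 - w) ^ (-s)) w := by
  have hw : |w| < 1 := abs_lt.2 ⟨by linarith, h1⟩
  have h1w : 0 < 1 - w := by linarith
  have hA : HasDerivAt (fun w : ℝ => (1 - w) ^ (1 - s)) ((s - 1) * (1 - w) ^ (-s)) w := by
    simpa using ((hasDerivAt_id w).const_sub 1).rpow_const (p := 1 - s) (Or.inl h1w.ne')
  have hB : HasDerivAt (fun w : ℝ => w ^ s) (s * w ^ (s - 1)) w :=
    hasDerivAt_rpow_const (Or.inl h0.ne')
  refine ((hA.mul hB).mul (hasDerivAt_F211 (by linarith) hw)).congr_deriv ?_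
  have e1 : (1 - w) ^ (1 - s) = (1 - w) * (1 - w) ^ (-s) := by
    rw [sub_eq_add_neg 1 s, rpow_add h1w, rpow_one]
  have e2 : w ^ s = w ^ (s - 1) * w := by
    rw [← rpow_add_one h0.ne', sub_add_cancel]
  simp only [Pi.mul_apply]
  rw [e1, e2]
  linear_combination (1 - w) ^ (-s) * w ^ (s - 1) * F211_ode hs hw

lemma inv_sub_one_rpow (h0 : 0 < w) (h1 : w ≤ 1) (p : ℝ) :
    (w⁻¹ - 1) ^ p = (1 - w) ^ p * w ^ (-p) := by
  rw [show w⁻¹ - 1 = (1 - w) / w by field_simp, div_rpow (by linarith) h0.le, rpow_neg h0.le,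
    div_eq_mul_inv]

lemma scaledIncBeta_rpow_neg (hq : 1 ≤ q) (hy : 0 ≤ y) :
    scaledIncBeta s (q ^ (-y)) = (q ^ y - 1) ^ (1 - s) / q ^ y * F211 (s + 1) (q ^ (-y)) := by
  have h0 : 0 < q ^ (-y) := rpow_pos_of_pos (by linarith) _
  have hqy : q ^ y = (q ^ (-y))⁻¹ := by rw [rpow_neg (by linarith), inv_inv]
  rw [hqy, inv_sub_one_rpow h0 (rpow_le_one_of_one_le_of_nonpos hq (by linarith)), scaledIncBeta,
    div_inv_eq_mul, neg_sub, mul_assoc _ _ (q ^ (-y)), ← rpow_add_one h0.ne', sub_add_cancel]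

lemma hasDerivAt_scaledIncBeta_rpow_neg (hq : 1 < q) (hs : 0 ≤ s) (hy : 0 < y) :
    HasDerivAt (fun y => scaledIncBeta s (q ^ (-y))) (-(s * log q) * (q ^ y - 1) ^ (-s)) y := by
  have hq0 : 0 < q := by linarith
  have h0 : 0 < q ^ (-y) := rpow_pos_of_pos hq0 _
  have h1 : q ^ (-y) < 1 := rpow_lt_one_of_one_lt_of_neg hq (by linarith)
  have hinner : HasDerivAt (fun y => q ^ (-y)) (q ^ (-y) * log q * -1) y :=
    ((hasStrictDerivAt_const_rpow hq0 (-y)).hasDerivAt).comp y (hasDerivAt_neg y)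
  refine ((hasDerivAt_scaledIncBeta hs h0 h1).comp y hinner).congr_deriv ?_
  have hqy : q ^ y = (q ^ (-y))⁻¹ := by rw [rpow_neg hq0.le, inv_inv]
  rw [hqy, inv_sub_one_rpow h0 h1.le, neg_neg]
  have e : (q ^ (-y)) ^ (s - 1) * q ^ (-y) = (q ^ (-y)) ^ s := by
    rw [← rpow_add_one h0.ne', sub_add_cancel]
  linear_combination (-(s * log q) * (1 - q ^ (-y)) ^ (-s)) * e

end ScaledIncBeta

/-- For `q > 1`, `s > 0`, `t > 0` and `n ≥ 0`,
`∫₀¹ (q^{n+x+t}-1)^{-s} dx` is given by a difference of hypergeometric terms. -/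
theorem integral_q_power_term (q s t : ℝ) (n : ℕ) (hq : 1 < q) (hs : 0 < s) (ht : 0 < t) :
    ∫ x in (0 : ℝ)..1, (q ^ ((n : ℝ) + x + t) - 1) ^ (-s)
      = (1 / (s * Real.log q)) *
        ((q ^ ((n : ℝ) + t) - 1) ^ (1 - s) / q ^ ((n : ℝ) + t)
            * F211 (s + 1) (q ^ (-((n : ℝ) + t)))
          - (q ^ ((n : ℝ) + t + 1) - 1) ^ (1 - s) / q ^ ((n : ℝ) + t + 1)
            * F211 (s + 1) (q ^ (-((n : ℝ) + t + 1)))) := by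
  have hL : 0 < log q := log_pos hq
  have hpos : ∀ x ∈ Set.uIcc (0 : ℝ) 1, 0 < (n : ℝ) + x + t := fun x hx => by
    rw [Set.uIcc_of_le zero_le_one] at hx
    linarith [hx.1, n.cast_nonneg' (α := ℝ)]
  have hderiv : ∀ x ∈ Set.uIcc (0 : ℝ) 1,
      HasDerivAt (fun x => scaledIncBeta s (q ^ (-((n : ℝ) + x + t))) / -(s * log q))
        ((q ^ ((n : ℝ) + x + t) - 1) ^ (-s)) x := fun x hx => by
    have hshift : HasDerivAt (fun x : ℝ => (n : ℝ) + x + t) 1 x :=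
      ((hasDerivAt_id x).const_add _).add_const t
    refine (((hasDerivAt_scaledIncBeta_rpow_neg hq hs.le (hpos x hx)).comp x hshift).div_const
      _).congr_deriv ?_
    field_simp
  have hcont :
      ContinuousOn (fun x : ℝ => (q ^ ((n : ℝ) + x + t) - 1) ^ (-s)) (Set.uIcc 0 1) := by
    have hq0 : q ≠ 0 := (zero_lt_one.trans hq).ne'
    refine ContinuousOn.rpow_const
      ((continuous_const.rpow (by fun_prop) fun _ => Or.inl hq0).sub continuous_const).continuousOn
      fun x hx => Or.inl ?_
    exact (sub_pos.2 (one_lt_rpow hq (hpos x hx))).ne'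
  rw [intervalIntegral.integral_eq_sub_of_hasDerivAt hderiv hcont.intervalIntegrable,
    add_zero, add_right_comm, scaledIncBeta_rpow_neg hq.le (by positivity),
    scaledIncBeta_rpow_neg hq.le (by positivity)]
  field_simp
  ring
end

section
/- Jacobi triple product in the form: for 0 < q < 1 and y ≠ 0 complex, (q²;q²)_∞ (qy;q²)_∞ (q/y;q²)_∞ = ∑_{n=-∞}^∞ (-1)^n q^{n²} y^n. -/
/-!
Putting `p = q²`, `z = x q^(1-2N)` in Gauss's `q`-binomial theorem
`∏_{j<n} (1 + z p^j) = ∑_k p^(k choose 2) [n k]_p z^k` with `n = 2N` and pairing the factor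
`j = N-1-m` with `j = N+m` gives the finite triple product
`∏_{m<N} (1 + x q^(2m+1)) (1 + x⁻¹ q^(2m+1)) = ∑_{|n|≤N} [2N, N+n]_{q²} q^(n²) x^n`.
Multiplied by `(q²;q²)_N`, the coefficient of `q^(n²) x^n` becomes
`(q²;q²)_N (q²;q²)_{2N} / ((q²;q²)_{N+n} (q²;q²)_{N-n})`, which lies in `[0, 1]` and tends
to `1` as `N → ∞`; by Tannery's theorem the series converges to the theta series, while the
partial products converge to the infinite ones. Then put `x = -y`.
-/

/-- The infinite `q`-Pochhammer symbol `(x;p)_∞ = ∏_{k≥0} (1 - x p^k)`. -/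
noncomputable def qPoch (x p : ℂ) : ℂ := ∏' k : ℕ, (1 - x * p ^ k)

open Filter Finset Topology

/-- The finite `q`-Pochhammer symbol `(x;p)_n`. -/
def qPochFin {R : Type*} [CommRing R] (x p : R) (n : ℕ) : R := ∏ k ∈ range n, (1 - x * p ^ k)

/-- The Gaussian binomial coefficient `[n k]_p`, defined by the `p`-Pascal rule. -/
def qBinom {R : Type*} [CommSemiring R] (p : R) : ℕ → ℕ → R
  | _, 0 => 1
  | 0, _ + 1 => 0
  | n + 1, k + 1 => qBinom p n k + p ^ (k + 1) * qBinom p n (k + 1)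

section qBinom

variable {R : Type*} [CommSemiring R] (p : R)

@[simp] lemma qBinom_zero_right (n : ℕ) : qBinom p n 0 = 1 := by cases n <;> rfl

@[simp] lemma qBinom_zero_succ (k : ℕ) : qBinom p 0 (k + 1) = 0 := rfl

lemma qBinom_succ_succ (n k : ℕ) :
    qBinom p (n + 1) (k + 1) = qBinom p n k + p ^ (k + 1) * qBinom p n (k + 1) := rfl

lemma qBinom_eq_zero_of_lt {n k : ℕ} (h : n < k) : qBinom p n k = 0 := by
  induction n generalizing k with
  | zero => obtain ⟨k, rfl⟩ := Nat.exists_eq_succ_of_ne_zero h.ne'; rfl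
  | succ n ih =>
    obtain ⟨k, rfl⟩ := Nat.exists_eq_succ_of_ne_zero (by omega : k ≠ 0)
    rw [qBinom_succ_succ, ih (by omega), ih (by omega), mul_zero, add_zero]

lemma map_qBinom {S : Type*} [CommSemiring S] (f : R →+* S) (n k : ℕ) :
    f (qBinom p n k) = qBinom (f p) n k := by
  induction n generalizing k with
  | zero => cases k <;> simp
  | succ n ih => cases k <;> simp [qBinom_succ_succ, ih]

lemma prod_one_add_mul_pow_eq_sum_qBinom (n : ℕ) (z : R) :
    ∏ j ∈ range n, (1 + z * p ^ j) =
      ∑ k ∈ range (n + 1), p ^ k.choose 2 * qBinom p n k * z ^ k := by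
  induction n generalizing z with
  | zero => simp
  | succ n ih =>
    obtain ⟨h, h_def⟩ :
        ∃ h : ℕ → R, h = fun k => p ^ k.choose 2 * qBinom p n k * (z * p) ^ k := ⟨_, rfl⟩
    have hprod : ∏ j ∈ range n, (1 + z * p ^ (j + 1)) = ∑ k ∈ range (n + 1), h k := by
      simp only [h_def, pow_succ', ← mul_assoc, ih]
    have hstep (k : ℕ) :
        p ^ (k + 1).choose 2 * qBinom p (n + 1) (k + 1) * z ^ (k + 1) = z * h k + h (k + 1) := by
      simp only [h_def, qBinom_succ_succ, Nat.choose_succ_succ', Nat.choose_one_right]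
      ring
    have htop : h (n + 1) = 0 := by simp [h_def, qBinom_eq_zero_of_lt p (Nat.lt_succ_self n)]
    rw [prod_range_succ', hprod, sum_range_succ' _ (n + 1), sum_congr rfl fun k _ => hstep k,
      sum_add_distrib, ← mul_sum, add_assoc]
    have h0 : h 0 = 1 := by simp [h_def]
    simp only [Nat.choose_zero_succ, pow_zero, qBinom_zero_right, mul_one]
    rw [← h0, ← sum_range_succ' h (n + 1), sum_range_succ h (n + 1), htop, h0]
    ring

end qBinom

section qPochFin

variable {R : Type*} [CommRing R]

@[simp] lemma qPochFin_zero (x p : R) : qPochFin x p 0 = 1 := prod_range_zero _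

lemma qPochFin_succ (x p : R) (n : ℕ) : qPochFin x p (n + 1) = qPochFin x p n * (1 - x * p ^ n) :=
  prod_range_succ _ _

lemma map_qPochFin {S : Type*} [CommRing S] (f : R →+* S) (x p : R) (n : ℕ) :
    f (qPochFin x p n) = qPochFin (f x) (f p) n := by
  simp [qPochFin, map_prod]

lemma qPochFin_mul_qPochFin_mul_qBinom (p : R) {n k : ℕ} (hkn : k ≤ n) :
    qPochFin p p k * qPochFin p p (n - k) * qBinom p n k = qPochFin p p n := by
  induction n generalizing k with
  | zero => obtain rfl := Nat.le_zero.mp hkn; simp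
  | succ n ih =>
    obtain _ | k := k
    · simp
    have h1 := ih (Nat.le_of_succ_le_succ hkn)
    rw [qBinom_succ_succ, Nat.succ_sub_succ, qPochFin_succ p p k, qPochFin_succ p p n]
    obtain rfl | hlt := (Nat.le_of_succ_le_succ hkn).eq_or_lt
    · rw [qBinom_eq_zero_of_lt p (Nat.lt_succ_self k)]
      linear_combination (1 - p * p ^ k) * h1
    obtain ⟨m, rfl⟩ := Nat.exists_eq_add_of_le (show k + 1 ≤ n by omega)
    have h2 := ih (Nat.le_add_right (k + 1) m)
    rw [show k + 1 + m - k = m + 1 by omega, qPochFin_succ] at *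
    rw [show k + 1 + m - (k + 1) = m by omega] at h2
    linear_combination (1 - p * p ^ k) * h1 + p ^ (k + 1) * (1 - p * p ^ m) * h2

end qPochFin

lemma two_mul_choose_two_add_self (k : ℕ) : 2 * k.choose 2 + k = k ^ 2 := by
  induction k with
  | zero => rfl
  | succ k ih => rw [Nat.choose_succ_succ', Nat.choose_one_right]; linear_combination ih

section FiniteJacobi

variable {K : Type*} [Field K] {q x : K}

lemma prod_range_div_pow_two_mul_add_one (hq : q ≠ 0) (N : ℕ) :
    ∏ m ∈ range N, x / q ^ (2 * m + 1) = x ^ N / q ^ N ^ 2 := by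
  induction N with
  | zero => simp
  | succ N ih => rw [prod_range_succ, ih]; field_simp; ring

lemma prod_range_two_mul_one_add (hq : q ≠ 0) (hx : x ≠ 0) (N : ℕ) :
    ∏ j ∈ range (2 * N), (1 + x * q / q ^ (2 * N) * (q ^ 2) ^ j) =
      x ^ N / q ^ N ^ 2 *
        ∏ m ∈ range N, ((1 + x * q ^ (2 * m + 1)) * (1 + x⁻¹ * q ^ (2 * m + 1))) := by
  have hlow : ∀ m ∈ range N, 1 + x * q / q ^ (2 * N) * (q ^ 2) ^ (N - 1 - m) =
      x / q ^ (2 * m + 1) * (1 + x⁻¹ * q ^ (2 * m + 1)) := by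
    intro m hm
    obtain ⟨r, rfl⟩ := Nat.exists_eq_add_of_lt (mem_range.mp hm)
    rw [show m + r + 1 - 1 - m = r by omega]
    field_simp
    ring
  have hhigh : ∀ m ∈ range N, 1 + x * q / q ^ (2 * N) * (q ^ 2) ^ (N + m) =
      1 + x * q ^ (2 * m + 1) := by
    intro m _
    field_simp
    ring
  have hsplit := prod_range_add (fun j => 1 + x * q / q ^ (2 * N) * (q ^ 2) ^ j) N N
  rw [← two_mul] at hsplit
  rw [hsplit, ← prod_range_reflect, prod_congr rfl hlow, prod_congr rfl hhigh,
    prod_mul_distrib, prod_range_div_pow_two_mul_add_one hq, prod_mul_distrib]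
  ring

lemma sq_pow_choose_two_mul_pow (hq : q ≠ 0) (hx : x ≠ 0) (N k : ℕ) :
    (q ^ 2) ^ k.choose 2 * (x * q / q ^ (2 * N)) ^ k =
      x ^ N / q ^ N ^ 2 * (q ^ (((k : ℤ) - N) ^ 2) * x ^ ((k : ℤ) - N)) := by
  have hsq : ((k : ℤ) - N) ^ 2 = ((k ^ 2 + N ^ 2 : ℕ) : ℤ) - ((2 * N * k : ℕ) : ℤ) := by
    push_cast; ring
  calc (q ^ 2) ^ k.choose 2 * (x * q / q ^ (2 * N)) ^ k
      = q ^ (2 * k.choose 2 + k) * x ^ k / q ^ (2 * N * k) := by ring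
    _ = x ^ N / q ^ N ^ 2 * (q ^ (((k : ℤ) - N) ^ 2) * x ^ ((k : ℤ) - N)) := by
      rw [two_mul_choose_two_add_self, hsq, zpow_sub₀ hq, zpow_sub₀ hx]
      simp only [zpow_natCast]
      field_simp
      ring

theorem jacobi_triple_product_finite (hq : q ≠ 0) (hx : x ≠ 0) (N : ℕ) :
    ∏ m ∈ range N, ((1 + x * q ^ (2 * m + 1)) * (1 + x⁻¹ * q ^ (2 * m + 1))) =
      ∑ k ∈ range (2 * N + 1),
        qBinom (q ^ 2) (2 * N) k * (q ^ (((k : ℤ) - N) ^ 2) * x ^ ((k : ℤ) - N)) := by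
  have gauss := prod_one_add_mul_pow_eq_sum_qBinom (q ^ 2) (2 * N) (x * q / q ^ (2 * N))
  have hterm (k : ℕ) :
      (q ^ 2) ^ k.choose 2 * qBinom (q ^ 2) (2 * N) k * (x * q / q ^ (2 * N)) ^ k =
        x ^ N / q ^ N ^ 2 *
          (qBinom (q ^ 2) (2 * N) k * (q ^ (((k : ℤ) - N) ^ 2) * x ^ ((k : ℤ) - N))) := by
    rw [mul_right_comm, sq_pow_choose_two_mul_pow hq hx]
    ring
  rw [prod_range_two_mul_one_add hq hx, sum_congr rfl fun k _ => hterm k, ← mul_sum] at gauss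
  exact mul_left_cancel₀ (div_ne_zero (pow_ne_zero _ hx) (pow_ne_zero _ hq)) gauss

end FiniteJacobi

section InfiniteProduct

variable {𝕜 : Type*} [NormedField 𝕜] {p : 𝕜}

lemma summable_norm_neg_mul_pow (hp : ‖p‖ < 1) (x : 𝕜) :
    Summable fun k : ℕ => ‖-(x * p ^ k)‖ := by
  simpa [norm_mul, norm_pow] using
    (summable_geometric_of_lt_one (norm_nonneg _) hp).mul_left ‖x‖

lemma tendsto_qPochFin [CompleteSpace 𝕜] (hp : ‖p‖ < 1) (x : 𝕜) :
    Tendsto (qPochFin x p) atTop (𝓝 (∏' k : ℕ, (1 - x * p ^ k))) := by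
  unfold qPochFin
  simp only [sub_eq_add_neg]
  exact (multipliable_one_add_of_summable
    (summable_norm_neg_mul_pow hp x)).hasProd.tendsto_prod_nat

lemma tprod_one_sub_mul_pow_ne_zero [CompleteSpace 𝕜] (hp : ‖p‖ < 1) {x : 𝕜}
    (hx : ∀ k, x * p ^ k ≠ 1) : ∏' k : ℕ, (1 - x * p ^ k) ≠ 0 := by
  simp only [sub_eq_add_neg]
  refine tprod_one_add_ne_zero_of_summable (fun k => ?_) (summable_norm_neg_mul_pow hp x)
  rw [← sub_eq_add_neg, sub_ne_zero]
  exact (hx k).symm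

end InfiniteProduct

section RealBase

variable {p : ℝ} (hp0 : 0 ≤ p) (hp1 : p < 1)
include hp0 hp1

lemma mul_pow_lt_one (k : ℕ) : p * p ^ k < 1 := by
  rw [← pow_succ']
  exact pow_lt_one₀ hp0 hp1 k.succ_ne_zero

lemma qPochFin_self_pos (n : ℕ) : 0 < qPochFin p p n :=
  prod_pos fun k _ => sub_pos.mpr (mul_pow_lt_one hp0 hp1 k)

lemma qPochFin_self_antitone : Antitone (qPochFin p p) := by
  refine antitone_nat_of_succ_le fun n => ?_
  rw [qPochFin_succ]
  refine mul_le_of_le_one_right (qPochFin_self_pos hp0 hp1 n).le ?_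
  have : 0 ≤ p * p ^ n := by positivity
  linarith

lemma qPochFin_self_mul_le {N a b : ℕ} (hab : a + b = 2 * N) :
    qPochFin p p N * qPochFin p p (a + b) ≤ qPochFin p p a * qPochFin p p b := by
  have hanti := qPochFin_self_antitone hp0 hp1
  have hpos := qPochFin_self_pos hp0 hp1
  rcases le_total a b with h | h
  · exact mul_le_mul (hanti (by omega)) (hanti (by omega)) (hpos _).le (hpos _).le
  · rw [mul_comm (qPochFin p p a)]
    exact mul_le_mul (hanti (by omega)) (hanti (by omega)) (hpos _).le (hpos _).le

lemma qBinom_eq_div {n k : ℕ} (hkn : k ≤ n) :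
    qBinom p n k = qPochFin p p n / (qPochFin p p k * qPochFin p p (n - k)) := by
  rw [eq_div_iff (mul_pos (qPochFin_self_pos hp0 hp1 k) (qPochFin_self_pos hp0 hp1 _)).ne',
    mul_comm, qPochFin_mul_qPochFin_mul_qBinom p hkn]

end RealBase

/-- `(p;p)_N [2N, N+n]_p`, the coefficient of `q^(n²) x^n` in `(q²;q²)_N` times the finite
triple product, where `p = q²`. -/
def jacobiCoeff (p : ℝ) (N : ℕ) (n : ℤ) : ℝ :=
  if n.natAbs ≤ N then qPochFin p p N * qBinom p (2 * N) (n + N).toNat else 0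

section JacobiCoeff

variable {p : ℝ} (hp0 : 0 ≤ p) (hp1 : p < 1)
include hp0 hp1

lemma jacobiCoeff_eq_div {N : ℕ} {n : ℤ} (hn : n.natAbs ≤ N) :
    jacobiCoeff p N n = qPochFin p p N * qPochFin p p (2 * N) /
      (qPochFin p p (n + N).toNat * qPochFin p p (N - n).toNat) := by
  rw [jacobiCoeff, if_pos hn, qBinom_eq_div hp0 hp1 (by omega), mul_div_assoc,
    show 2 * N - (n + N).toNat = (N - n).toNat by omega]

lemma abs_jacobiCoeff_le_one (N : ℕ) (n : ℤ) : |jacobiCoeff p N n| ≤ 1 := by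
  by_cases hn : n.natAbs ≤ N
  · have hpos := qPochFin_self_pos hp0 hp1
    have hab : (n + N).toNat + (N - n).toNat = 2 * N := by omega
    have hden := mul_pos (hpos (n + N).toNat) (hpos (N - n).toNat)
    rw [jacobiCoeff_eq_div hp0 hp1 hn, abs_of_nonneg (div_nonneg (mul_pos (hpos _) (hpos _)).le
      hden.le), div_le_one hden, ← hab]
    exact qPochFin_self_mul_le hp0 hp1 hab
  · simp [jacobiCoeff, hn]

lemma tendsto_jacobiCoeff (n : ℤ) : Tendsto (fun N => jacobiCoeff p N n) atTop (𝓝 1) := by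
  have hnorm : ‖p‖ < 1 := by rwa [Real.norm_of_nonneg hp0]
  have hL := tendsto_qPochFin hnorm p
  have hL0 := tprod_one_sub_mul_pow_ne_zero hnorm fun k => (mul_pow_lt_one hp0 hp1 k).ne
  have hidx {f : ℕ → ℕ} (hf : ∀ N, N - n.natAbs ≤ f N) :
      Tendsto (fun N => qPochFin p p (f N)) atTop (𝓝 (∏' k : ℕ, (1 - p * p ^ k))) :=
    hL.comp (tendsto_atTop_mono hf (tendsto_sub_atTop_nat _))
  have hlim := (hL.mul (hidx (f := (2 * ·)) fun N => by omega)).div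
    ((hidx (f := fun N => (n + N).toNat) fun N => by omega).mul
      (hidx (f := fun N => (N - n).toNat) fun N => by omega)) (mul_ne_zero hL0 hL0)
  rw [div_self (mul_ne_zero hL0 hL0)] at hlim
  refine hlim.congr' ?_
  filter_upwards [eventually_ge_atTop n.natAbs] with N hN
  exact (jacobiCoeff_eq_div hp0 hp1 hN).symm

end JacobiCoeff

lemma summable_pow_sq_mul_pow {a : ℝ} (ha0 : 0 ≤ a) (ha1 : a < 1) (r : ℝ) :
    Summable fun m : ℕ => a ^ m ^ 2 * r ^ m := by
  have hsmall : Tendsto (fun m : ℕ => ‖a ^ m * r‖) atTop (𝓝 0) := by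
    simpa using ((tendsto_pow_atTop_nhds_zero_of_lt_one ha0 ha1).mul_const r).norm
  refine (summable_geometric_two).of_norm_bounded_eventually_nat ?_
  filter_upwards [(hsmall.eventually_le_const (by norm_num : (0 : ℝ) < 1 / 2))] with m hm
  rw [sq, pow_mul, ← mul_pow, norm_pow]
  exact pow_le_pow_left₀ (norm_nonneg _) hm m

lemma summable_zpow_sq_mul_zpow {a : ℝ} (ha0 : 0 ≤ a) (ha1 : a < 1) (r : ℝ) :
    Summable fun n : ℤ => a ^ (n ^ 2) * r ^ n := by
  refine Summable.of_nat_of_neg ?_ ?_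
  · refine (summable_pow_sq_mul_pow ha0 ha1 r).congr fun m => ?_
    norm_cast
  · refine (summable_pow_sq_mul_pow ha0 ha1 r⁻¹).congr fun m => ?_
    rw [neg_sq, zpow_neg, ← inv_zpow]
    norm_cast

lemma tendsto_tsum_mul_of_tendsto_one {α ι 𝕜 : Type*} [NormedField 𝕜] [CompleteSpace 𝕜]
    {l : Filter α} {c : α → ι → 𝕜} {a : ι → 𝕜} (ha : Summable fun i => ‖a i‖)
    (hc : ∀ i, Tendsto (c · i) l (𝓝 1)) (hc1 : ∀ t i, ‖c t i‖ ≤ 1) :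
    Tendsto (fun t => ∑' i, c t i * a i) l (𝓝 (∑' i, a i)) := by
  refine tendsto_tsum_of_dominated_convergence ha (fun i => ?_) (.of_forall fun t i => ?_)
  · simpa using (hc i).mul_const (a i)
  · rw [norm_mul]
    exact mul_le_of_le_one_left (norm_nonneg _) (hc1 t i)

lemma tsum_jacobiCoeff_mul {q : ℝ} (hq : q ≠ 0) {y : ℂ} (hy : y ≠ 0) (N : ℕ) :
    ∑' n : ℤ, (jacobiCoeff (q ^ 2) N n : ℂ) * ((-1) ^ n * (q : ℂ) ^ (n ^ 2) * y ^ n) =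
      qPochFin ((q : ℂ) ^ 2) ((q : ℂ) ^ 2) N * qPochFin ((q : ℂ) * y) ((q : ℂ) ^ 2) N *
        qPochFin ((q : ℂ) / y) ((q : ℂ) ^ 2) N := by
  have hqc : (q : ℂ) ≠ 0 := Complex.ofReal_ne_zero.mpr hq
  let shift : ℕ ↪ ℤ := ⟨fun k => (k : ℤ) - N, fun _ _ h => by simpa using h⟩
  have shift_apply (k : ℕ) : shift k = (k : ℤ) - N := rfl
  have hsupp : ∀ n ∉ (range (2 * N + 1)).map shift,
      (jacobiCoeff (q ^ 2) N n : ℂ) * ((-1) ^ n * (q : ℂ) ^ (n ^ 2) * y ^ n) = 0 := by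
    intro n hn
    have : ¬ n.natAbs ≤ N := fun h =>
      hn (mem_map.mpr ⟨(n + N).toNat, mem_range.mpr (by omega), by rw [shift_apply]; omega⟩)
    simp [jacobiCoeff, this]
  have hcoeff (k : ℕ) (hk : k ∈ range (2 * N + 1)) :
      (jacobiCoeff (q ^ 2) N (shift k) : ℂ) =
        qPochFin ((q : ℂ) ^ 2) ((q : ℂ) ^ 2) N * qBinom ((q : ℂ) ^ 2) (2 * N) k := by
    have hk := mem_range.mp hk
    rw [shift_apply, jacobiCoeff, if_pos (by omega), show ((k : ℤ) - N + N).toNat = k by omega]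
    simp only [← Complex.ofRealHom_eq_coe, map_mul, map_qPochFin, map_qBinom, map_pow]
  calc ∑' n : ℤ, (jacobiCoeff (q ^ 2) N n : ℂ) * ((-1) ^ n * (q : ℂ) ^ (n ^ 2) * y ^ n)
      = qPochFin ((q : ℂ) ^ 2) ((q : ℂ) ^ 2) N * ∑ k ∈ range (2 * N + 1),
          qBinom ((q : ℂ) ^ 2) (2 * N) k *
            ((q : ℂ) ^ (((k : ℤ) - N) ^ 2) * (-y) ^ ((k : ℤ) - N)) := by
        rw [tsum_eq_sum hsupp, sum_map, mul_sum]
        refine sum_congr rfl fun k hk => ?_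
        rw [hcoeff k hk, shift_apply, neg_eq_neg_one_mul y, mul_zpow]
        ring
    _ = qPochFin ((q : ℂ) ^ 2) ((q : ℂ) ^ 2) N * ∏ m ∈ range N,
          ((1 + -y * (q : ℂ) ^ (2 * m + 1)) * (1 + (-y)⁻¹ * (q : ℂ) ^ (2 * m + 1))) := by
        rw [jacobi_triple_product_finite hqc (neg_ne_zero.mpr hy)]
    _ = _ := by
        rw [mul_assoc]
        congr 1
        rw [qPochFin, qPochFin, ← prod_mul_distrib]
        refine prod_congr rfl fun m _ => ?_
        field_simp
        ring

/-- Jacobi triple product: for `0 < q < 1` and `y ≠ 0`,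
`(q²;q²)_∞ (qy;q²)_∞ (q/y;q²)_∞ = ∑_{n∈ℤ} (-1)^n q^{n²} y^n`. -/
theorem jacobi_triple_product (q : ℝ) (hq0 : 0 < q) (hq1 : q < 1) (y : ℂ) (hy : y ≠ 0) :
    qPoch ((q : ℂ) ^ 2) ((q : ℂ) ^ 2) * qPoch ((q : ℂ) * y) ((q : ℂ) ^ 2)
        * qPoch ((q : ℂ) / y) ((q : ℂ) ^ 2)
      = ∑' n : ℤ, (-1 : ℂ) ^ n * (q : ℂ) ^ (n ^ 2) * y ^ n := by
  have hp0 : 0 ≤ q ^ 2 := sq_nonneg q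
  have hp1 : q ^ 2 < 1 := by nlinarith
  have hp : ‖(q : ℂ) ^ 2‖ < 1 := by simpa [abs_of_pos hq0] using hp1
  have hsum : Summable fun n : ℤ => ‖(-1 : ℂ) ^ n * (q : ℂ) ^ (n ^ 2) * y ^ n‖ := by
    simpa [abs_of_pos hq0] using summable_zpow_sq_mul_zpow hq0.le hq1 ‖y‖
  have hseries := tendsto_tsum_mul_of_tendsto_one hsum
    (fun n => by simpa using (tendsto_jacobiCoeff hp0 hp1 n).ofReal)
    (fun N n => by simpa using abs_jacobiCoeff_le_one hp0 hp1 N n)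
  simp only [tsum_jacobiCoeff_mul hq0.ne' hy] at hseries
  exact tendsto_nhds_unique
    (((tendsto_qPochFin hp _).mul (tendsto_qPochFin hp _)).mul (tendsto_qPochFin hp _)) hseries
end
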